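/- Let X₁, …, Xₙ be independent random variables with values in a space 𝕏, and let Z = f(X₁,…,Xₙ) be square-integrable and satisfy the bounded differences property with constants c₁,…,cₙ: changing only the i-th coordinate changes f by at most c_i. Then Var(Z) ≤ (1/4)∑_{i=1}^n c_i². -/

import Mathlib

/-!
Bounded differences make `f` bounded, so every moment below exists. Split off the first
coordinate: by Fubini, the variance over a product is the mean conditional variance in the first
coordinate plus the variance of the conditional mean. With the other coordinates frozen, `f`
ranges over an interval of length `c₀`, so Popoviciu's inequality bounds the first term by
`c₀² / 4`; the conditional mean again has bounded differences, with constants `c₁, …`, so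
induction bounds the second. Independence identifies the law of `(X₁, …, Xₙ)` with the product
of the marginals.
-/

open MeasureTheory ProbabilityTheory

section

variable {α β : Type*} [MeasurableSpace α] [MeasurableSpace β]

theorem variance_le_sq_div_four_of_abs_sub_le {μ : Measure α} [IsProbabilityMeasure μ]
    {g : α → ℝ} (hg : AEMeasurable g μ) {c : ℝ} (hc : ∀ s t, |g s - g t| ≤ c) :
    Var[g; μ] ≤ c ^ 2 / 4 := by
  have := nonempty_of_isProbabilityMeasure μ
  have hbdd : BddBelow (Set.range g) :=
    ⟨g (Classical.arbitrary α) - c, by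
      rintro _ ⟨x, rfl⟩
      linarith [(abs_le.1 (hc (Classical.arbitrary α) x)).2]⟩
  set m := sInf (Set.range g)
  have hg_mem : ∀ x, g x ∈ Set.Icc m (m + c) := fun x =>
    ⟨csInf_le hbdd ⟨x, rfl⟩, by
      have : g x - c ≤ m := le_csInf (Set.range_nonempty g) <| by
        rintro _ ⟨y, rfl⟩
        linarith [(abs_le.1 (hc x y)).2]
      linarith⟩
  calc Var[g; μ] ≤ ((m + c - m) / 2) ^ 2 := variance_le_sq_of_bounded (ae_of_all _ hg_mem) hg
    _ = c ^ 2 / 4 := by ring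

theorem variance_prod_eq_integral_variance_add_variance_integral
    {μ : Measure α} {ν : Measure β} [IsProbabilityMeasure μ] [IsProbabilityMeasure ν]
    {g : α × β → ℝ} (hg : Measurable g) {C : ℝ} (hC : ∀ p, |g p| ≤ C) :
    Var[g; μ.prod ν] =
      ∫ y, Var[fun x => g (x, y); μ] ∂ν + Var[fun y => ∫ x, g (x, y) ∂μ; ν] := by
  set F := fun y => ∫ x, g (x, y) ∂μ
  set G := fun y => ∫ x, g (x, y) ^ 2 ∂μ
  have hslice : ∀ y, MemLp (fun x => g (x, y)) 2 μ := fun y =>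
    MemLp.of_bound (hg.comp measurable_prodMk_right).aestronglyMeasurable C
      (ae_of_all _ fun x => hC _)
  have hF_meas : Measurable F := hg.stronglyMeasurable.integral_prod_left'.measurable
  have hF_abs : ∀ y, |F y| ≤ C := fun y => by
    simpa using norm_integral_le_of_norm_le_const (μ := μ)
      (Filter.Eventually.of_forall fun x => (Real.norm_eq_abs _).trans_le (hC (x, y)))
  have hF : MemLp F 2 ν := MemLp.of_bound hF_meas.aestronglyMeasurable C (ae_of_all _ hF_abs)
  have hg2 : MemLp g 2 (μ.prod ν) := MemLp.of_bound hg.aestronglyMeasurable C (ae_of_all _ hC)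
  have hG_int : Integrable G ν := hg2.integrable_sq.integral_prod_right
  have hcond : ∀ y, Var[fun x => g (x, y); μ] = G y - F y ^ 2 := fun y => by
    rw [variance_eq_sub (hslice y)]; rfl
  rw [variance_eq_sub hg2, variance_eq_sub hF, funext hcond, integral_sub hG_int hF.integrable_sq]
  simp only [Pi.pow_apply]
  rw [integral_prod_symm _ hg2.integrable_sq, integral_prod_symm _ (hg2.integrable one_le_two)]
  ring

end

def HasBoundedDifferences {ι 𝕏 : Type*} (f : (ι → 𝕏) → ℝ) (c : ι → ℝ) : Prop :=
  ∀ (x x' : ι → 𝕏) (i : ι), (∀ j, j ≠ i → x j = x' j) → |f x - f x'| ≤ c i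

namespace HasBoundedDifferences

variable {ι 𝕏 : Type*} {f : (ι → 𝕏) → ℝ} {c : ι → ℝ}

theorem abs_sub_le_finset_sum [DecidableEq ι] (hf : HasBoundedDifferences f c) (s : Finset ι)
    {x y : ι → 𝕏} (hxy : ∀ j ∉ s, x j = y j) : |f x - f y| ≤ ∑ i ∈ s, c i := by
  induction s using Finset.induction_on generalizing x with
  | empty => simp [funext fun j => hxy j (Finset.notMem_empty j)]
  | @insert a s ha ih =>
    set z := Function.update x a (y a)
    have hxz : |f x - f z| ≤ c a := hf x z a fun j hj => (Function.update_of_ne hj _ _).symm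
    have hzy : |f z - f y| ≤ ∑ i ∈ s, c i := ih fun j hj => by
      by_cases hja : j = a
      · simp [z, hja]
      · rw [show z j = x j from Function.update_of_ne hja _ _]
        exact hxy j (by simp [hja, hj])
    calc |f x - f y| ≤ |f x - f z| + |f z - f y| := abs_sub_le _ _ _
      _ ≤ c a + ∑ i ∈ s, c i := add_le_add hxz hzy
      _ = ∑ i ∈ insert a s, c i := (Finset.sum_insert ha).symm

theorem exists_abs_le [Fintype ι] [Nonempty (ι → 𝕏)] (hf : HasBoundedDifferences f c) :
    ∃ C, ∀ x, |f x| ≤ C := by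
  classical
  obtain ⟨x₀⟩ := ‹Nonempty (ι → 𝕏)›
  refine ⟨|f x₀| + ∑ i, c i, fun x => ?_⟩
  have := hf.abs_sub_le_finset_sum Finset.univ (x := x) (y := x₀) (by simp)
  linarith [abs_sub_abs_le_abs_sub (f x) (f x₀)]

theorem comp_insertNth {n : ℕ} {f : (Fin (n + 1) → 𝕏) → ℝ} {c : Fin (n + 1) → ℝ}
    (hf : HasBoundedDifferences f c) (i : Fin (n + 1)) (t : 𝕏) :
    HasBoundedDifferences (fun y => f (Fin.insertNth i t y)) (c ∘ i.succAbove) := by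
  intro y y' j hyy'
  refine hf _ _ (i.succAbove j) fun k hk => ?_
  cases k using Fin.succAboveCases i with
  | x => simp
  | p k =>
    have hkj : k ≠ j := fun h => hk (h ▸ rfl)
    simp [hyy' k hkj]

theorem abs_sub_insertNth_le {n : ℕ} {f : (Fin (n + 1) → 𝕏) → ℝ} {c : Fin (n + 1) → ℝ}
    (hf : HasBoundedDifferences f c) (i : Fin (n + 1)) (s t : 𝕏) (y : Fin n → 𝕏) :
    |f (Fin.insertNth i s y) - f (Fin.insertNth i t y)| ≤ c i :=
  hf _ _ i fun j hj => by
    obtain ⟨k, rfl⟩ := Fin.exists_succAbove_eq hj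
    simp

theorem integral {α : Type*} [MeasurableSpace α] {μ : Measure α} [IsProbabilityMeasure μ]
    {g : α → (ι → 𝕏) → ℝ} (hg : ∀ t, HasBoundedDifferences (g t) c)
    (hint : ∀ x, Integrable (fun t => g t x) μ) :
    HasBoundedDifferences (fun x => ∫ t, g t x ∂μ) c := by
  intro x x' i hxx'
  rw [← integral_sub (hint x) (hint x')]
  simpa using norm_integral_le_of_norm_le_const (μ := μ)
    (Filter.Eventually.of_forall fun t => (Real.norm_eq_abs _).trans_le (hg t x x' i hxx'))

variable [MeasurableSpace 𝕏]

theorem variance_pi_le {n : ℕ} {μ : Fin n → Measure 𝕏} [∀ i, IsProbabilityMeasure (μ i)]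
    {f : (Fin n → 𝕏) → ℝ} (hf_meas : Measurable f) {c : Fin n → ℝ}
    (hf : HasBoundedDifferences f c) :
    Var[f; Measure.pi μ] ≤ (1 / 4) * ∑ i, c i ^ 2 := by
  induction n with
  | zero =>
    have hosc : ∀ x y, |f x - f y| ≤ 0 := fun x y => by
      simpa using hf.abs_sub_le_finset_sum Finset.univ (x := x) (y := y) (by simp)
    simpa using variance_le_sq_div_four_of_abs_sub_le hf_meas.aemeasurable hosc
  | succ n ih =>
    have := nonempty_of_isProbabilityMeasure (Measure.pi μ)
    set e := MeasurableEquiv.piFinSuccAbove (fun _ => 𝕏) 0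
    set ν : Fin n → Measure 𝕏 := fun j => μ (Fin.succAbove 0 j)
    set g : 𝕏 × (Fin n → 𝕏) → ℝ := fun p => f (e.symm p)
    obtain ⟨C, hC⟩ := hf.exists_abs_le
    have hg_meas : Measurable g := hf_meas.comp e.symm.measurable
    have hslice : ∀ y, Integrable (fun t => g (t, y)) (μ 0) := fun y =>
      Integrable.of_bound (hg_meas.comp measurable_prodMk_right).aestronglyMeasurable C
        (ae_of_all _ fun t => hC _)
    have hcond : ∀ y, Var[fun t => g (t, y); μ 0] ≤ c 0 ^ 2 / 4 := fun y =>
      variance_le_sq_div_four_of_abs_sub_le (hg_meas.comp measurable_prodMk_right).aemeasurable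
        fun s t => hf.abs_sub_insertNth_le 0 s t y
    have hmean : Var[fun y => ∫ t, g (t, y) ∂μ 0; Measure.pi ν] ≤
        (1 / 4) * ∑ j, c (Fin.succAbove 0 j) ^ 2 :=
      ih hg_meas.stronglyMeasurable.integral_prod_left'.measurable
        (integral (fun t => hf.comp_insertNth 0 t) hslice)
    calc Var[f; Measure.pi μ] = Var[g; (μ 0).prod (Measure.pi ν)] :=
          ((measurePreserving_piFinSuccAbove μ 0).symm _).variance_fun_comp
            hf_meas.aemeasurable |>.symm
      _ = ∫ y, Var[fun t => g (t, y); μ 0] ∂Measure.pi ν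
            + Var[fun y => ∫ t, g (t, y) ∂μ 0; Measure.pi ν] :=
          variance_prod_eq_integral_variance_add_variance_integral hg_meas fun p => hC _
      _ ≤ c 0 ^ 2 / 4 + (1 / 4) * ∑ j, c (Fin.succAbove 0 j) ^ 2 := by
          refine add_le_add ?_ hmean
          calc ∫ y, Var[fun t => g (t, y); μ 0] ∂Measure.pi ν ≤ ∫ _, c 0 ^ 2 / 4 ∂Measure.pi ν :=
                integral_mono_of_nonneg (ae_of_all _ fun y => variance_nonneg _ _)
                  (integrable_const _) (ae_of_all _ hcond)
            _ = c 0 ^ 2 / 4 := by simp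
      _ = (1 / 4) * ∑ i, c i ^ 2 := by
          rw [Fin.sum_univ_succAbove _ 0]; ring

end HasBoundedDifferences

open MeasureTheory ProbabilityTheory in
theorem bounded_differences_variance_bound_general
    {Ω 𝕏 : Type*} [MeasureSpace Ω] [IsProbabilityMeasure (volume : Measure Ω)]
    [MeasurableSpace 𝕏] (n : ℕ) (X : Fin n → Ω → 𝕏)
    (hXmeas : ∀ i, Measurable (X i))
    (hindep : iIndepFun X volume)
    (f : (Fin n → 𝕏) → ℝ) (hfmeas : Measurable f)
    (c : Fin n → ℝ)
    (hbd : ∀ (x x' : Fin n → 𝕏) (i : Fin n),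
      (∀ j, j ≠ i → x j = x' j) → |f x - f x'| ≤ c i) :
    variance (fun ω => f (fun i => X i ω)) volume ≤ (1 / 4) * ∑ i, (c i) ^ 2 := by
  have hlaw : volume.map (fun ω i => X i ω) = Measure.pi fun i => volume.map (X i) :=
    hindep.map_fun_eq_pi_map fun i => (hXmeas i).aemeasurable
  have := fun i => Measure.isProbabilityMeasure_map (μ := volume) (hXmeas i).aemeasurable
  calc variance (fun ω => f (fun i => X i ω)) volume
      = Var[f; volume.map (fun ω i => X i ω)] :=
        (variance_map hfmeas.aemeasurable (measurable_pi_lambda _ hXmeas).aemeasurable).symm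
    _ ≤ (1 / 4) * ∑ i, c i ^ 2 := hlaw ▸ HasBoundedDifferences.variance_pi_le hfmeas hbd

open MeasureTheory ProbabilityTheory in
theorem bounded_differences_variance_bound
    {Ω 𝕏 : Type*} [MeasureSpace Ω] [IsProbabilityMeasure (volume : Measure Ω)]
    [MeasurableSpace 𝕏] (n : ℕ) (X : Fin n → Ω → 𝕏)
    (hXmeas : ∀ i, Measurable (X i))
    (hindep : iIndepFun X volume)
    (f : (Fin n → 𝕏) → ℝ) (hfmeas : Measurable f)
    (c : Fin n → ℝ)
    (hbd : ∀ (x x' : Fin n → 𝕏) (i : Fin n),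
      (∀ j, j ≠ i → x j = x' j) → |f x - f x'| ≤ c i)
    (hZ : MemLp (fun ω => f (fun i => X i ω)) 2 volume) :
    variance (fun ω => f (fun i => X i ω)) volume ≤ (1 / 4) * ∑ i, (c i) ^ 2 :=
  bounded_differences_variance_bound_general n X hXmeas hindep f hfmeas c hbd
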